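/- Let I ⊆ {1, …, r} be a connected subset containing i, and write ϖ_i − v_{I,I^c}(ϖ_i) = Σ_{m ∈ I} c_m α_m (such an expression exists and is unique since the α_m are linearly independent). Then c_m > 0 for every m ∈ I. -/

import Mathlib

/-!
Averaging a positive definite form over the (finite) group of linear automorphisms preserving `Φ`
gives a symmetric positive definite form `( , )` invariant under the simple reflections, so that
`2 (α_k, u) = ⟨u, α_k^∨⟩ (α_k, α_k)`; in particular the zero pattern of the Cartan matrix is
symmetric. Put `u = ϖ_i - v = Σ_{m ∈ I} c_m α_m`, so `⟨u, α_k^∨⟩ = δ_{ik} ≥ 0` for `k ∈ I`.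
If the negative part `w = Σ_{c_m < 0} c_m α_m` were nonzero, then `⟨w, α_k^∨⟩ ≥ 0` on its support
(off-diagonal Cartan entries are `≤ 0`) would give `(w, w) ≤ 0`; hence `c ≥ 0`. If `c_k = 0`, every
term of `Σ_m c_m ⟨α_m, α_k^∨⟩ = δ_{ik}` is `≤ 0`, so `k ≠ i` and `c_m = 0` for each neighbour `m`
of `k`; by connectedness a zero coefficient would reach `c_i`.
-/

open Module Finset Pointwise

section Reflection

variable {R M : Type*} [CommRing R] [AddCommGroup M] [Module R M]

theorem finite_stabilizer_of_span_eq_top {Φ : Set M} (hΦ : Φ.Finite)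
    (hspan : Submodule.span R Φ = ⊤) : Finite (MulAction.stabilizer (M ≃ₗ[R] M) Φ) := by
  have := hΦ.to_subtype
  refine Finite.of_injective (fun g (β : Φ) => (⟨g.1 β, ?_⟩ : Φ)) fun g h hgh => ?_
  · exact (MulAction.mem_stabilizer_set' hΦ).1 g.2 β.2
  · refine Subtype.ext <| LinearEquiv.toLinearMap_injective <|
      LinearMap.ext_on hspan fun β hβ => ?_
    simpa using congrArg Subtype.val (congrFun hgh ⟨β, hβ⟩)

theorem reflection_mem_stabilizer {x : M} {f : Dual R M} (h : f x = 2) {Φ : Set M}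
    (hΦ : Φ.Finite) (hΦx : ∀ β ∈ Φ, β - f β • x ∈ Φ) :
    reflection h ∈ MulAction.stabilizer (M ≃ₗ[R] M) Φ :=
  (MulAction.mem_stabilizer_set' hΦ).2 fun β hβ => by
    simpa [LinearEquiv.smul_def, reflection_apply] using hΦx β hβ

theorem two_mul_apply_eq_of_isOrthogonal_reflection {B : LinearMap.BilinForm R M} {x : M}
    {f : Dual R M} (h : f x = 2) (hB : B.IsOrthogonal (reflection h)) (u : M) :
    2 * B x u = f u * B x x := by
  have := hB x u
  rw [reflection_apply_self, reflection_apply, map_sub, map_smul] at this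
  simp only [map_neg, LinearMap.neg_apply, smul_eq_mul] at this
  linear_combination -this

end Reflection

section Averaging

variable {K V : Type*} [Field K] [LinearOrder K] [IsStrictOrderedRing K]
  [AddCommGroup V] [Module K V]

theorem Module.Basis.exists_bilinForm_isSymm_pos {ι : Type*} [Finite ι] (b : Basis ι K V) :
    ∃ B : LinearMap.BilinForm K V, B.IsSymm ∧ ∀ u ≠ 0, 0 < B u u := by
  have := Fintype.ofFinite ι
  refine ⟨(dotProductBilin K K).compl₁₂ b.equivFun.toLinearMap b.equivFun.toLinearMap,
    ⟨fun u w => by simp [dotProduct_comm]⟩, fun u hu => ?_⟩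
  have hne : b.equivFun u ≠ 0 := by simpa using hu
  simp only [LinearMap.compl₁₂_apply, LinearEquiv.coe_coe, dotProductBilin_apply_apply]
  exact lt_of_le_of_ne (Finset.sum_nonneg fun j _ => mul_self_nonneg _)
    (Ne.symm (mt dotProduct_self_eq_zero.1 hne))

theorem exists_bilinForm_isSymm_pos_isOrthogonal (G : Subgroup (V ≃ₗ[K] V)) [Finite G]
    {B₀ : LinearMap.BilinForm K V} (hsymm : B₀.IsSymm) (hpos : ∀ u ≠ 0, 0 < B₀ u u) :
    ∃ B : LinearMap.BilinForm K V, B.IsSymm ∧ (∀ u ≠ 0, 0 < B u u) ∧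
      ∀ g ∈ G, B.IsOrthogonal g := by
  have := Fintype.ofFinite G
  have hB_apply : ∀ u w, (∑ g : G, B₀.compl₁₂ g.1.toLinearMap g.1.toLinearMap) u w =
      ∑ g : G, B₀ (g.1 u) (g.1 w) := by
    simp [LinearMap.sum_apply]
  refine ⟨∑ g : G, B₀.compl₁₂ g.1.toLinearMap g.1.toLinearMap, ⟨fun u w => ?_⟩,
    fun u hu => ?_, fun g hg u w => ?_⟩
  · simp only [hB_apply]
    exact Finset.sum_congr rfl fun g _ => hsymm.eq _ _
  · rw [hB_apply]
    exact Finset.sum_pos (fun g _ => hpos _ (g.1.map_ne_zero_iff.2 hu)) Finset.univ_nonempty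
  · rw [hB_apply, hB_apply]
    exact Fintype.sum_equiv (Equiv.mulRight ⟨g, hg⟩) _ _ fun _ => rfl

theorem exists_reflection_invariant_form {ι : Type*} (b : Basis ι K V)
    (coroot : ι → Dual K V) (hdiag : ∀ k, coroot k (b k) = 2) {Φ : Set V} (hΦ : Φ.Finite)
    (hΦroot : ∀ k, b k ∈ Φ) (hΦrefl : ∀ β ∈ Φ, ∀ k, β - coroot k β • b k ∈ Φ) :
    ∃ B : LinearMap.BilinForm K V, B.IsSymm ∧ (∀ u ≠ 0, 0 < B u u) ∧
      ∀ k u, 2 * B (b k) u = coroot k u * B (b k) (b k) := by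
  have := hΦ.to_subtype
  have : Finite ι := .of_injective (fun k => (⟨b k, hΦroot k⟩ : Φ)) fun k l h =>
    b.injective (congrArg Subtype.val h)
  have hspan : Submodule.span K Φ = ⊤ :=
    eq_top_mono (Submodule.span_mono (Set.range_subset_iff.2 hΦroot)) b.span_eq
  have := finite_stabilizer_of_span_eq_top hΦ hspan
  obtain ⟨B₀, hB₀symm, hB₀pos⟩ := b.exists_bilinForm_isSymm_pos
  obtain ⟨B, hBsymm, hBpos, hBinv⟩ :=
    exists_bilinForm_isSymm_pos_isOrthogonal (MulAction.stabilizer _ Φ) hB₀symm hB₀pos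
  exact ⟨B, hBsymm, hBpos, fun k => two_mul_apply_eq_of_isOrthogonal_reflection (hdiag k)
    (hBinv _ (reflection_mem_stabilizer (hdiag k) hΦ fun β hβ => hΦrefl β hβ k))⟩

end Averaging

theorem SimpleGraph.Reachable.imp_of_forall_adj {W : Type*} {G : SimpleGraph W} {P : W → Prop}
    {u v : W} (h : G.Reachable u v) (hP : ∀ x y, G.Adj x y → P x → P y) (hu : P u) : P v := by
  rw [SimpleGraph.reachable_iff_reflTransGen] at h
  induction h with
  | refl => exact hu
  | tail _ hadj ih => exact hP _ _ hadj ih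

section CartanMatrix

variable {K V ι : Type*} [Field K] [LinearOrder K] [IsStrictOrderedRing K]
  [AddCommGroup V] [Module K V] {α : ι → V} {coroot : ι → Dual K V}
  {B : LinearMap.BilinForm K V}

theorem coroot_apply_eq_zero_comm (hα : ∀ k, α k ≠ 0) (hBsymm : B.IsSymm)
    (hBpos : ∀ u ≠ 0, 0 < B u u) (hB : ∀ k u, 2 * B (α k) u = coroot k u * B (α k) (α k))
    (k m : ι) : coroot k (α m) = 0 ↔ coroot m (α k) = 0 := by
  have key : ∀ a b, coroot a (α b) = 0 ↔ B (α a) (α b) = 0 := fun a b => by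
    rw [← mul_eq_zero_iff_right (hBpos _ (hα a)).ne', ← hB, mul_eq_zero_iff_left two_ne_zero]
  rw [key, key, ← hBsymm.eq]

theorem nonneg_of_forall_coroot_nonneg (hα : LinearIndependent K α)
    (hBpos : ∀ u ≠ 0, 0 < B u u) (hB : ∀ k u, 2 * B (α k) u = coroot k u * B (α k) (α k))
    (hoff : ∀ m k, m ≠ k → coroot k (α m) ≤ 0) {I : Finset ι} {c : ι → K}
    (hc : ∀ k ∈ I, 0 ≤ coroot k (∑ m ∈ I, c m • α m)) : ∀ m ∈ I, 0 ≤ c m := by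
  classical
  set N := I.filter (c · < 0)
  set w := ∑ m ∈ N, c m • α m
  have hw_coroot : ∀ k ∈ N, 0 ≤ coroot k w := fun k hk => by
    obtain ⟨hkI, hck⟩ := Finset.mem_filter.1 hk
    have hrest : coroot k (∑ m ∈ I.filter (¬ c · < 0), c m • α m) ≤ 0 := by
      simp only [map_sum, map_smul, smul_eq_mul]
      refine Finset.sum_nonpos fun m hm => ?_
      obtain ⟨-, hcm⟩ := Finset.mem_filter.1 hm
      exact mul_nonpos_of_nonneg_of_nonpos (not_lt.1 hcm)
        (hoff m k fun hmk => hcm (hmk ▸ hck))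
    have := hc k hkI
    rw [← Finset.sum_filter_add_sum_filter_not I (c · < 0), map_add] at this
    linarith
  have hw_self : B w w ≤ 0 := by
    have hBw : B w = ∑ k ∈ N, c k • B (α k) := by simp only [w, map_sum, map_smul]
    rw [hBw, LinearMap.sum_apply]
    refine Finset.sum_nonpos fun k hk => ?_
    have hBkw : 0 ≤ 2 * B (α k) w :=
      hB k w ▸ mul_nonneg (hw_coroot k hk) (hBpos _ (hα.ne_zero k)).le
    rw [LinearMap.smul_apply, smul_eq_mul]
    exact mul_nonpos_of_nonpos_of_nonneg (Finset.mem_filter.1 hk).2.le (by linarith)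
  have hw : w = 0 := by_contra fun hw => (hBpos w hw).not_ge hw_self
  intro m hm
  by_contra! hcm
  exact hcm.ne (linearIndependent_iff'.1 hα N c hw m (Finset.mem_filter.2 ⟨hm, hcm⟩))

theorem pos_of_forall_coroot_nonneg_of_connected (hα : LinearIndependent K α)
    (hBsymm : B.IsSymm) (hBpos : ∀ u ≠ 0, 0 < B u u)
    (hB : ∀ k u, 2 * B (α k) u = coroot k u * B (α k) (α k))
    (hoff : ∀ m k, m ≠ k → coroot k (α m) ≤ 0) {I : Finset ι} {c : ι → K}
    (hconn : ((SimpleGraph.fromRel fun a b => coroot b (α a) ≠ 0).induce (I : Set ι)).Connected)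
    (hc : ∀ k ∈ I, 0 ≤ coroot k (∑ m ∈ I, c m • α m)) {k₀ : ι} (hk₀ : k₀ ∈ I)
    (hk₀pos : 0 < coroot k₀ (∑ m ∈ I, c m • α m)) : ∀ m ∈ I, 0 < c m := by
  have hnonneg := nonneg_of_forall_coroot_nonneg hα hBpos hB hoff hc
  have hcoroot : ∀ k, coroot k (∑ m ∈ I, c m • α m) = ∑ m ∈ I, c m * coroot k (α m) := by
    simp [map_sum]
  have hterm : ∀ k, c k = 0 → ∀ m ∈ I, c m * coroot k (α m) ≤ 0 := fun k hck m hm => by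
    by_cases hmk : m = k
    · simp [hmk, hck]
    · exact mul_nonpos_of_nonneg_of_nonpos (hnonneg m hm) (hoff m k hmk)
  have hzero_of_adj : ∀ k ∈ I, ∀ m ∈ I, c k = 0 → coroot k (α m) ≠ 0 → c m = 0 := by
    intro k hk m hm hck hkm
    have hsum : ∑ m ∈ I, c m * coroot k (α m) = 0 :=
      le_antisymm (Finset.sum_nonpos (hterm k hck)) (hcoroot k ▸ hc k hk)
    have hmk := (Finset.sum_eq_zero_iff_of_nonpos (hterm k hck)).1 hsum m hm
    exact (mul_eq_zero.1 hmk).resolve_right hkm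
  intro m hm
  refine (hnonneg m hm).lt_of_ne' fun hcm => hk₀pos.not_ge ?_
  have hck₀ : c k₀ = 0 := by
    refine (hconn.preconnected ⟨m, hm⟩ ⟨k₀, hk₀⟩).imp_of_forall_adj
      (P := fun k : (I : Set ι) => c k = 0) (fun a b hab ha => hzero_of_adj a a.2 b b.2 ha ?_) hcm
    simp only [SimpleGraph.comap_adj, Function.Embedding.coe_subtype,
      SimpleGraph.fromRel_adj] at hab
    exact hab.2.elim (mt (coroot_apply_eq_zero_comm hα.ne_zero hBsymm hBpos hB _ _).2) id
  rw [hcoroot]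
  exact Finset.sum_nonpos (hterm k₀ hck₀)

end CartanMatrix

theorem stmt_13_general {V : Type*} [AddCommGroup V] [Module ℚ V] {r : ℕ}
    (b : Module.Basis (Fin r) ℚ V) (coroot : Fin r → Module.Dual ℚ V)
    (hdiag : ∀ i, coroot i (b i) = 2)
    (hoff : ∀ i j : Fin r, i ≠ j → coroot j (b i) ≤ 0)
    (Φ : Set V) (hΦfin : Φ.Finite) (hΦroot : ∀ i, b i ∈ Φ)
    (hΦrefl : ∀ β ∈ Φ, ∀ i, β - coroot i β • b i ∈ Φ)
    (ϖ : Fin r → V)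
    (hϖ : ∀ i j : Fin r, coroot j (ϖ i) = if i = j then 1 else 0)
    (i : Fin r) (I : Finset (Fin r)) (hiI : i ∈ I)
    (hconn : ((SimpleGraph.fromRel fun a c : Fin r => coroot c (b a) ≠ 0).induce
      (↑I : Set (Fin r))).Connected)
    (v : V) (hvI : ∀ k ∈ I, coroot k v = 0)
    (c : Fin r → ℚ) (hc : ϖ i - v = ∑ m ∈ I, c m • b m) :
    ∀ m ∈ I, 0 < c m := by
  obtain ⟨B, hBsymm, hBpos, hB⟩ :=
    exists_reflection_invariant_form b coroot hdiag hΦfin hΦroot hΦrefl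
  have hcoroot : ∀ k ∈ I, coroot k (∑ m ∈ I, c m • b m) = if i = k then 1 else 0 :=
    fun k hk => by rw [← hc, map_sub, hvI k hk, hϖ, sub_zero]
  refine pos_of_forall_coroot_nonneg_of_connected b.linearIndependent hBsymm hBpos hB hoff hconn
    (fun k hk => ?_) hiI (by simp [hcoroot i hiI])
  rw [hcoroot k hk]
  split_ifs <;> norm_num

/-- Let `I ⊆ {1, …, r}` be a connected subset (for the Dynkin graph)
containing `i`, and write `ϖ_i − v_{I,Iᶜ}(ϖ_i) = Σ_{m ∈ I} c_m α_m`.  Then `c_m > 0` for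
every `m ∈ I`. -/
theorem stmt_13 {V : Type*} [AddCommGroup V] [Module ℚ V] {r : ℕ}
    (b : Module.Basis (Fin r) ℚ V) (coroot : Fin r → Module.Dual ℚ V)
    (hdiag : ∀ i, coroot i (b i) = 2)
    (hoff : ∀ i j : Fin r, i ≠ j → coroot j (b i) ≤ 0)
    (hint : ∀ i j : Fin r, ∃ n : ℤ, coroot j (b i) = (n : ℚ))
    (Φ : Set V) (hΦfin : Φ.Finite) (hΦroot : ∀ i, b i ∈ Φ)
    (hΦrefl : ∀ β ∈ Φ, ∀ i, β - coroot i β • b i ∈ Φ)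
    (x : Fin r → Module.Dual ℚ V)
    (hx : ∀ i j : Fin r, x j (b i) = if i = j then 1 else 0)
    (ϖ : Fin r → V)
    (hϖ : ∀ i j : Fin r, coroot j (ϖ i) = if i = j then 1 else 0)
    (i : Fin r) (I : Finset (Fin r)) (hiI : i ∈ I)
    (hconn : ((SimpleGraph.fromRel fun a c : Fin r => coroot c (b a) ≠ 0).induce
      (↑I : Set (Fin r))).Connected)
    (v : V) (hvI : ∀ k ∈ I, coroot k v = 0)
    (hvJ : ∀ j ∈ Iᶜ, x j (ϖ i - v) = 0)
    (c : Fin r → ℚ) (hc : ϖ i - v = ∑ m ∈ I, c m • b m) :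
    ∀ m ∈ I, 0 < c m :=
  stmt_13_general b coroot hdiag hoff Φ hΦfin hΦroot hΦrefl ϖ hϖ i I hiI hconn v hvI c hc
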